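/- arXiv:2312.12043 — 3 statements merged into one kernel-verified Lean document; each statement's English description precedes it below -/
import Mathlib

section
/- Let 𝕂 be a subfield of ℂ, q ≥ 1, A ∈ M_q(𝕂(z)), and let α ∈ 𝕂* not be a singularity of the differential system Y' = AY. Then for any P_1, …, P_q ∈ 𝕂[z], the image of 𝓡[P_1,…,P_q] under the isomorphism 𝓢 → ℂ^q, Y ↦ Y(α), is a subspace of ℂ^q defined over 𝕂. -/
open Polynomial

noncomputable section

/-- The domain on which we work with (single-valued) solutions of the system
`Y' = (Anum/den)Y`: the slit plane minus the singularities of the system. -/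
def sysDomain (den : Polynomial ℂ) : Set ℂ :=
  {z : ℂ | den.eval z ≠ 0} ∩ Complex.slitPlane

/-- The set of solutions of the differential system `Y' = (Anum/den) Y` (solutions are
normalized to vanish off the domain, so that this is a `ℂ`-vector space). -/
def solSet (q : ℕ) (Anum : Matrix (Fin q) (Fin q) (Polynomial ℂ)) (den : Polynomial ℂ) :
    Set (ℂ → Fin q → ℂ) :=
  {Y | (∀ z ∈ sysDomain den, ∀ i, HasDerivAt (fun w => Y w i)
        (∑ j, (Anum i j).eval z / den.eval z * Y z j) z) ∧
      ∀ z ∉ sysDomain den, Y z = 0}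

/-- `𝓢`, the space of solutions of `Y' = (Anum/den) Y`. -/
def SolSpace (q : ℕ) (Anum : Matrix (Fin q) (Fin q) (Polynomial ℂ)) (den : Polynomial ℂ) :
    Submodule ℂ (ℂ → Fin q → ℂ) :=
  Submodule.span ℂ (solSet q Anum den)

/-- `𝓡[P₁,…,P_q]`, the space of solutions `Y` of `Y' = (Anum/den) Y` whose remainder
`R(Y) = ∑ᵢ Pᵢ yᵢ` vanishes identically. -/
def RSpace (q : ℕ) (Anum : Matrix (Fin q) (Fin q) (Polynomial ℂ)) (den : Polynomial ℂ)
    (P : Fin q → Polynomial ℂ) : Submodule ℂ (ℂ → Fin q → ℂ) :=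
  Submodule.span ℂ
    {Y | Y ∈ solSet q Anum den ∧ ∀ z ∈ sysDomain den, ∑ i, (P i).eval z * Y z i = 0}

/-- The functions `P_{k,i}` obtained by applying `(d/dz + ᵗA)^k` to `(P₁,…,P_q)`
(index shift: `PkFun … k` is the paper's `P_{k+1,·}`), so that
`R(Y)^{(k)} = ∑ᵢ PkFun k i · yᵢ`. -/
def PkFun (q : ℕ) (Anum : Matrix (Fin q) (Fin q) (Polynomial ℂ)) (den : Polynomial ℂ)
    (P : Fin q → Polynomial ℂ) : ℕ → Fin q → ℂ → ℂ
  | 0 => fun i z => (P i).eval z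
  | k + 1 => fun i z => deriv (PkFun q Anum den P k i) z
      + ∑ j, (Anum j i).eval z / den.eval z * PkFun q Anum den P k j z

/-- A function belongs to the Nilsson class at `0` and vanishes at `0` with order at
least `T`: it has a Nilsson expansion on a slit punctured neighbourhood of `0` in which
all exponents have real part at least `T`. -/
def NilssonVanishes (u : ℂ → ℂ) (T : ℝ) : Prop :=
  ∃ (n : ℕ) (e : Fin n → ℂ) (l : Fin n → ℕ) (h : Fin n → ℂ → ℂ) (r : ℝ), 0 < r ∧
    (∀ k, AnalyticOnNhd ℂ (h k) (Metric.ball (0 : ℂ) r)) ∧ (∀ k, T ≤ (e k).re) ∧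
    ∀ z ∈ Metric.ball (0 : ℂ) r ∩ Complex.slitPlane,
      u z = ∑ k : Fin n, h k z * z ^ (e k) * (Complex.log z) ^ (l k)

/-- Evaluation at a point `α`, as a linear map on vector-valued functions. -/
def evalMap (q : ℕ) (α : ℂ) : (ℂ → Fin q → ℂ) →ₗ[ℂ] (Fin q → ℂ) where
  toFun Y := Y α
  map_add' _ _ := rfl
  map_smul' _ _ := rfl

/-! The `k`-th derivative of `R(Y) = ∑ Pᵢ yᵢ` along a solution is `∑ P_{k,i} yᵢ`, where the
`P_{k,i}` are rational functions with coefficients in `K` and no poles off the zeros of `den`.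
The domain of the system, a slit plane minus finitely many points, is connected, so by the identity
theorem `R(Y) ≡ 0` iff all these derivatives vanish at `α`, i.e. iff `Y(α)` lies in the common
kernel of the linear forms `v ↦ ∑ P_{k,i}(α) vᵢ`. Evaluation at `α` being an isomorphism
`𝓢 → ℂ^q`, the image of `𝓡` is this kernel; as the forms have coefficients in `K`, expanding the
coordinates of a kernel vector in a `K`-basis of `ℂ` writes it as a combination of kernel vectors
with coordinates in `K`. -/

open Set Filter Topology Complex

theorem isPreconnected_range_diff_of_countable {E X : Type*} [AddCommGroup E] [Module ℝ E]
    [TopologicalSpace E] [ContinuousAdd E] [ContinuousSMul ℝ E] [TopologicalSpace X]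
    (hE : 1 < Module.rank ℝ E) {f : E → X} (hf : Continuous f) (hinj : Function.Injective f)
    {Z : Set X} (hZ : Z.Countable) : IsPreconnected (range f \ Z) := by
  rw [← image_compl_preimage]
  exact ((hZ.preimage hinj).isConnected_compl_of_one_lt_rank hE).isPreconnected.image f
    hf.continuousOn

theorem image_sq_rightHalfPlane : (· ^ 2) '' {z : ℂ | 0 < z.re} = slitPlane := by
  ext w
  constructor
  · rintro ⟨z, hz, rfl⟩
    rw [mem_slitPlane_iff]
    by_cases him : z.im = 0
    · left
      have hz : 0 < z.re := hz
      simpa [sq, him] using mul_pos hz hz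
    · right
      have : (z ^ 2).im = 2 * z.re * z.im := by simp only [sq, mul_im]; ring
      rw [this]
      exact mul_ne_zero (mul_ne_zero two_ne_zero (ne_of_gt hz)) him
  · intro hw
    refine ⟨exp (log w / 2), ?_, ?_⟩
    · have harg := (arg_le_pi w).lt_of_ne (slitPlane_arg_ne_pi hw)
      simp only [mem_ofPred_eq, exp_re, div_ofNat_re, div_ofNat_im, log_im]
      exact mul_pos (Real.exp_pos _)
        (Real.cos_pos_of_mem_Ioo ⟨by linarith [neg_pi_lt_arg w], by linarith⟩)
    · simp only [← exp_nat_mul, Nat.cast_ofNat]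
      rw [mul_div_cancel₀ _ two_ne_zero, exp_log (slitPlane_ne_zero hw)]

theorem injOn_sq_rightHalfPlane : InjOn (· ^ 2 : ℂ → ℂ) {z : ℂ | 0 < z.re} := by
  intro z hz w hw h
  rcases sq_eq_sq_iff_eq_or_eq_neg.1 h with h | h
  · exact h
  · simp only [mem_ofPred_eq, h, neg_re] at hz hw; linarith

theorem range_exp_re_add_im_mul_I :
    range (fun w : ℂ => (Real.exp w.re : ℂ) + w.im * I) = {z : ℂ | 0 < z.re} := by
  ext z
  refine ⟨?_, fun hz => ⟨Real.log z.re + z.im * I, ?_⟩⟩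
  · rintro ⟨w, rfl⟩; simp [exp_ofReal_re, Real.exp_pos]
  · apply Complex.ext <;> simp [Real.exp_log hz]

theorem isPreconnected_slitPlane_diff {Z : Set ℂ} (hZ : Z.Countable) :
    IsPreconnected (slitPlane \ Z) := by
  set g : ℂ → ℂ := fun w => (Real.exp w.re : ℂ) + w.im * I
  have hg : Function.Injective g := by
    intro w w' h
    have hre := congrArg re h
    have him := congrArg im h
    simp [g, exp_ofReal_re, exp_ofReal_im] at hre him
    exact Complex.ext hre him
  have hrange : range ((· ^ 2) ∘ g) = slitPlane := by
    rw [range_comp, range_exp_re_add_im_mul_I, image_sq_rightHalfPlane]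
  rw [← hrange]
  refine isPreconnected_range_diff_of_countable (by simp [rank_real_complex]) (by fun_prop) ?_ hZ
  have hmem : ∀ w, g w ∈ {z : ℂ | 0 < z.re} := fun w => range_exp_re_add_im_mul_I ▸ mem_range_self w
  exact fun w w' h => hg (injOn_sq_rightHalfPlane (hmem w) (hmem w') h)

theorem mulVec_comp_linearMap {L : Type*} [Field L] {K : Subfield L} {m n : Type*} [Fintype n]
    (M : Matrix m n L) (hM : ∀ i j, M i j ∈ K) (φ : L →ₗ[K] L) (w : n → L) :
    M.mulVec (φ ∘ w) = φ ∘ M.mulVec w := by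
  ext i
  simp only [Matrix.mulVec, dotProduct, Function.comp_apply, map_sum]
  refine Finset.sum_congr rfl fun j _ => ?_
  exact (φ.map_smul ⟨M i j, hM i j⟩ (w j)).symm

theorem exists_span_eq_ker_mulVecLin {L : Type*} [Field L] (K : Subfield L) {m n : Type*}
    [Fintype n] (M : Matrix m n L) (hM : ∀ i j, M i j ∈ K) :
    ∃ s : Set (n → L), (∀ v ∈ s, ∀ j, v j ∈ K) ∧
      Submodule.span L s = LinearMap.ker M.mulVecLin := by
  classical
  refine ⟨{v | (∀ j, v j ∈ K) ∧ M.mulVec v = 0}, fun v hv => hv.1, le_antisymm ?_ fun w hw => ?_⟩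
  · rw [Submodule.span_le]
    exact fun v hv => hv.2
  let b := Module.Basis.ofVectorSpace K L
  let coord : _ → L →ₗ[K] L := fun t => (Algebra.linearMap K L).comp (b.coord t)
  let T := Finset.univ.biUnion fun j => (b.repr (w j)).support
  have hw_eq : w = ∑ t ∈ T, b t • (coord t ∘ w) := by
    ext j
    conv_lhs => rw [← b.linearCombination_repr (w j), Finsupp.linearCombination_apply]
    rw [Finsupp.sum_of_support_subset _
      (Finset.subset_biUnion_of_mem (fun j => (b.repr (w j)).support) (Finset.mem_univ j)) _
      (fun t _ => zero_smul K (b t))]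
    simp [T, coord, Algebra.smul_def, mul_comm]
  rw [hw_eq]
  refine Submodule.sum_mem _ fun t _ =>
    Submodule.smul_mem _ _ (Submodule.subset_span ⟨fun j => ?_, ?_⟩)
  · exact (b.coord t (w j)).2
  · rw [mulVec_comp_linearMap M hM, show M.mulVec w = 0 from hw]
    ext i; simp

section DerivativeSequence

variable {E : Type*} [NormedAddCommGroup E] [NormedSpace ℂ E]
  {U : Set ℂ} {u : ℕ → ℂ → E}

theorem iteratedDeriv_eqOn_of_hasDerivAt_succ (hU : IsOpen U)
    (hu : ∀ k, ∀ z ∈ U, HasDerivAt (u k) (u (k + 1) z) z) (k : ℕ) :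
    EqOn (iteratedDeriv k (u 0)) (u k) U := by
  induction k with
  | zero => exact fun _ _ => rfl
  | succ k ih =>
    intro z hz
    rw [iteratedDeriv_succ, (eventuallyEq_of_mem (hU.mem_nhds hz) ih).deriv_eq, (hu k z hz).deriv]

theorem eqOn_zero_of_hasDerivAt_succ_of_forall_eq_zero [CompleteSpace E] (hU : IsOpen U)
    (hUc : IsPreconnected U)
    (hu : ∀ k, ∀ z ∈ U, HasDerivAt (u k) (u (k + 1) z) z) {α : ℂ} (hα : α ∈ U)
    (h : ∀ k, u k α = 0) : EqOn (u 0) 0 U := by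
  have hana : AnalyticOnNhd ℂ (u 0) U :=
    DifferentiableOn.analyticOnNhd
      (fun z hz => (hu 0 z hz).differentiableAt.differentiableWithinAt) hU
  refine hana.eqOn_zero_of_preconnected_of_eventuallyEq_zero hUc hα ?_
  refine analyticOrderAt_eq_top.1 (ENat.eq_top_iff_forall_ge.2 fun n => ?_)
  rw [natCast_le_analyticOrderAt_iff_iteratedDeriv_eq_zero (hana α hα)]
  intro k _
  rw [iteratedDeriv_eqOn_of_hasDerivAt_succ hU hu k hα, h k]

theorem eqOn_zero_of_hasDerivAt_succ_of_eqOn_zero (hU : IsOpen U)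
    (hu : ∀ k, ∀ z ∈ U, HasDerivAt (u k) (u (k + 1) z) z) (h : EqOn (u 0) 0 U) (k : ℕ) :
    EqOn (u k) 0 U := by
  induction k with
  | zero => exact h
  | succ k ih =>
    intro z hz
    have hzero : u k =ᶠ[𝓝 z] fun _ => 0 := eventually_of_mem (hU.mem_nhds hz) ih
    exact ((hu k z hz).congr_of_eventuallyEq hzero.symm).unique (hasDerivAt_const z 0)

end DerivativeSequence

section PolynomialCoefficients

variable {L : Type*} [Field L] (K : Subfield L)

theorem mem_liftsRing_subtype_iff (p : L[X]) :
    p ∈ liftsRing K.subtype ↔ ∀ n, p.coeff n ∈ K := by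
  simp [← lifts_iff_liftsRing, lifts_iff_coeff_lifts]

theorem derivative_mem_liftsRing_subtype {p : L[X]} (hp : p ∈ liftsRing K.subtype) :
    derivative p ∈ liftsRing K.subtype := by
  rw [← lifts_iff_liftsRing, mem_lifts] at hp ⊢
  obtain ⟨p₀, rfl⟩ := hp
  exact ⟨derivative p₀, (derivative_map p₀ _).symm⟩

theorem eval_mem_of_mem_liftsRing_subtype {p : L[X]} (hp : p ∈ liftsRing K.subtype) {α : L}
    (hα : α ∈ K) : p.eval α ∈ K := by
  rw [← lifts_iff_liftsRing, mem_lifts] at hp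
  obtain ⟨p₀, rfl⟩ := hp
  rw [show α = K.subtype ⟨α, hα⟩ from rfl, eval_map, eval₂_at_apply]
  exact SetLike.coe_mem _

end PolynomialCoefficients

section Solutions

variable {q : ℕ} {Anum : Matrix (Fin q) (Fin q) ℂ[X]} {den : ℂ[X]}

theorem hasDerivAt_eval_div_pow (N d : ℂ[X]) (k : ℕ) {z : ℂ} (hz : d.eval z ≠ 0) :
    HasDerivAt (fun w => N.eval w / d.eval w ^ k)
      ((derivative N * d - k * N * derivative d).eval z / d.eval z ^ (k + 1)) z := by
  refine ((N.hasDerivAt z).div ((d.hasDerivAt z).pow k) (pow_ne_zero k hz)).congr_deriv ?_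
  rcases k with _ | k
  · simp [hz]
  · simp only [Pi.pow_apply, eval_sub, eval_mul, eval_natCast, Nat.add_sub_cancel]
    field_simp
    ring

theorem PkFun_eq_div_pow {Q : Fin q → ℂ[X]} (S : Subring ℂ[X]) (hS : ∀ p ∈ S, derivative p ∈ S)
    (hA : ∀ i j, Anum i j ∈ S) (hden : den ∈ S) (hQ : ∀ i, Q i ∈ S) (k : ℕ) :
    ∃ N : Fin q → ℂ[X], (∀ i, N i ∈ S) ∧
      ∀ i z, den.eval z ≠ 0 → PkFun q Anum den Q k i z = (N i).eval z / den.eval z ^ k := by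
  induction k with
  | zero => exact ⟨Q, hQ, fun i z _ => by simp [PkFun]⟩
  | succ k ih =>
    obtain ⟨N, hNS, hN⟩ := ih
    refine ⟨fun i => derivative (N i) * den - k * N i * derivative den + ∑ j, Anum j i * N j,
      fun i => ?_, fun i z hz => ?_⟩
    · exact S.add_mem (S.sub_mem (S.mul_mem (hS _ (hNS i)) hden)
        (S.mul_mem (S.mul_mem (natCast_mem S k) (hNS i)) (hS _ hden)))
        (S.sum_mem fun j _ => S.mul_mem (hA j i) (hNS j))
    · have hloc : PkFun q Anum den Q k i =ᶠ[𝓝 z] fun w => (N i).eval w / den.eval w ^ k :=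
        (den.continuous.continuousAt.eventually_ne hz).mono fun w hw => hN i w hw
      simp only [PkFun, hloc.deriv_eq, (hasDerivAt_eval_div_pow (N i) den k hz).deriv,
        hN _ z hz, eval_add, eval_finsetSum, eval_mul]
      rw [add_div, Finset.sum_div]
      congr 1
      refine Finset.sum_congr rfl fun j _ => ?_
      field_simp
      ring

theorem differentiableAt_PkFun (Q : Fin q → ℂ[X]) (k : ℕ) (i : Fin q) {z : ℂ}
    (hz : den.eval z ≠ 0) : DifferentiableAt ℂ (PkFun q Anum den Q k i) z := by
  obtain ⟨N, -, hN⟩ := PkFun_eq_div_pow (Anum := Anum) (Q := Q) ⊤ (fun _ _ => trivial)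
    (fun _ _ => trivial) trivial (fun _ => trivial) k
  have hloc : PkFun q Anum den Q k i =ᶠ[𝓝 z] fun w => (N i).eval w / den.eval w ^ k :=
    (den.continuous.continuousAt.eventually_ne hz).mono fun w hw => hN i w hw
  exact (hasDerivAt_eval_div_pow (N i) den k hz).differentiableAt.congr_of_eventuallyEq hloc

theorem PkFun_mem_of_coeff_mem (K : Subfield ℂ) {Q : Fin q → ℂ[X]}
    (hAK : ∀ i j n, (Anum i j).coeff n ∈ K) (hdenK : ∀ n, den.coeff n ∈ K)
    (hQK : ∀ i n, (Q i).coeff n ∈ K) {α : ℂ} (hαK : α ∈ K) (hα : den.eval α ≠ 0) (k : ℕ)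
    (i : Fin q) : PkFun q Anum den Q k i α ∈ K := by
  have hS := mem_liftsRing_subtype_iff K
  obtain ⟨N, hNS, hN⟩ := PkFun_eq_div_pow (liftsRing K.subtype)
    (fun _ => derivative_mem_liftsRing_subtype K) (fun i j => (hS _).2 (hAK i j))
    ((hS _).2 hdenK) (fun i => (hS _).2 (hQK i)) k
  rw [hN i α hα]
  exact div_mem (eval_mem_of_mem_liftsRing_subtype K (hNS i) hαK)
    (pow_mem (eval_mem_of_mem_liftsRing_subtype K ((hS _).2 hdenK) hαK) k)

theorem isOpen_sysDomain (den : ℂ[X]) : IsOpen (sysDomain den) :=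
  (isOpen_ne_fun den.continuous continuous_const).inter isOpen_slitPlane

theorem isPreconnected_sysDomain (hden : den ≠ 0) : IsPreconnected (sysDomain den) := by
  have : sysDomain den = slitPlane \ {z | den.IsRoot z} := by
    ext z
    simp [sysDomain, and_comm]
  rw [this]
  exact isPreconnected_slitPlane_diff (den.finite_setOfPred_isRoot hden).countable

variable (q Anum den) in
def solSubmodule : Submodule ℂ (ℂ → Fin q → ℂ) where
  carrier := solSet q Anum den
  zero_mem' := ⟨fun z _ i => by simpa using hasDerivAt_const z (0 : ℂ), fun _ _ => rfl⟩
  add_mem' := fun ⟨hY, hY₀⟩ ⟨hW, hW₀⟩ =>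
    ⟨fun z hz i => by simpa [mul_add, Finset.sum_add_distrib] using (hY z hz i).fun_add (hW z hz i),
      fun z hz => by simp [hY₀ z hz, hW₀ z hz]⟩
  smul_mem' := fun c _ ⟨hY, hY₀⟩ =>
    ⟨fun z hz i => by simpa [Finset.mul_sum, mul_left_comm] using (hY z hz i).const_mul c,
      fun z hz => by simp [hY₀ z hz]⟩

theorem mem_SolSpace_iff {Y : ℂ → Fin q → ℂ} : Y ∈ SolSpace q Anum den ↔ Y ∈ solSet q Anum den :=
  SetLike.ext_iff.1 (Submodule.span_eq (solSubmodule q Anum den)) Y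

variable (q Anum den) in
def remainderDeriv (Q : Fin q → ℂ[X]) (Y : ℂ → Fin q → ℂ) (k : ℕ) (z : ℂ) : ℂ :=
  ∑ i, PkFun q Anum den Q k i z * Y z i

theorem hasDerivAt_remainderDeriv {Y : ℂ → Fin q → ℂ} (hY : Y ∈ solSet q Anum den)
    (Q : Fin q → ℂ[X]) (k : ℕ) {z : ℂ} (hz : z ∈ sysDomain den) :
    HasDerivAt (remainderDeriv q Anum den Q Y k) (remainderDeriv q Anum den Q Y (k + 1) z) z := by
  have h := HasDerivAt.fun_sum fun i (_ : i ∈ Finset.univ) =>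
    (differentiableAt_PkFun (Anum := Anum) Q k i hz.1).hasDerivAt.mul (hY.1 z hz i)
  refine h.congr_deriv ?_
  simp only [remainderDeriv, PkFun, add_mul, Finset.sum_add_distrib, Finset.mul_sum,
    Finset.sum_mul]
  rw [Finset.sum_comm (f := fun i j => _ * _ * Y z i)]
  congr 1
  exact Finset.sum_congr rfl fun i _ => Finset.sum_congr rfl fun j _ => by ring

theorem eq_zero_of_apply_eq_zero (hden : den ≠ 0) {α : ℂ} (hα : α ∈ sysDomain den)
    {Y : ℂ → Fin q → ℂ} (hY : Y ∈ solSet q Anum den) (hYα : Y α = 0) : Y = 0 := by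
  funext z i
  by_cases hz : z ∈ sysDomain den
  · have h := eqOn_zero_of_hasDerivAt_succ_of_forall_eq_zero (isOpen_sysDomain den)
      (isPreconnected_sysDomain hden) (fun k _ => hasDerivAt_remainderDeriv hY (Pi.single i 1) k)
      hα (fun k => by simp [remainderDeriv, hYα]) hz
    simpa [remainderDeriv, PkFun, Pi.single_apply, apply_ite (eval z)] using h
  · exact congrFun (hY.2 z hz) i

theorem exists_mem_solSet_apply_eq (hden : den ≠ 0)
    (hdim : Module.finrank ℂ (SolSpace q Anum den) = q) {α : ℂ} (hα : α ∈ sysDomain den)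
    (v : Fin q → ℂ) : ∃ Y ∈ solSet q Anum den, Y α = v := by
  let ev := (evalMap q α).domRestrict (SolSpace q Anum den)
  have hinj : Function.Injective ev := (injective_iff_map_eq_zero ev).2 fun Y hY =>
    Subtype.ext (eq_zero_of_apply_eq_zero hden hα (mem_SolSpace_iff.1 Y.2) hY)
  have := Module.Finite.of_injective ev hinj
  obtain ⟨⟨Y, hY⟩, rfl⟩ := (LinearMap.injective_iff_surjective_of_finrank_eq_finrank
    (by rw [hdim, Module.finrank_fin_fun])).1 hinj v
  exact ⟨Y, mem_SolSpace_iff.1 hY, rfl⟩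

theorem map_evalMap_RSpace (hden : den ≠ 0) (hdim : Module.finrank ℂ (SolSpace q Anum den) = q)
    {α : ℂ} (hα : α ∈ sysDomain den) (P : Fin q → ℂ[X]) :
    (RSpace q Anum den P).map (evalMap q α) =
      LinearMap.ker (Matrix.of fun k i => PkFun q Anum den P k i α).mulVecLin := by
  have hchain {Y} (hY : Y ∈ solSet q Anum den) k z (hz : z ∈ sysDomain den) :=
    hasDerivAt_remainderDeriv hY P k hz
  apply le_antisymm
  · rw [RSpace, Submodule.map_span, Submodule.span_le]
    rintro _ ⟨Y, ⟨hY, hR⟩, rfl⟩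
    funext k
    exact eqOn_zero_of_hasDerivAt_succ_of_eqOn_zero (isOpen_sysDomain den) (hchain hY) hR k hα
  · intro v hv
    obtain ⟨Y, hY, rfl⟩ := exists_mem_solSet_apply_eq hden hdim hα v
    have hR := eqOn_zero_of_hasDerivAt_succ_of_forall_eq_zero (isOpen_sysDomain den)
      (isPreconnected_sysDomain hden) (hchain hY) hα (congrFun hv)
    exact ⟨Y, Submodule.subset_span ⟨hY, hR⟩, rfl⟩

theorem map_evalMap_RSpace_eq_bot {α : ℂ} (hα : α ∉ sysDomain den) (P : Fin q → ℂ[X]) :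
    (RSpace q Anum den P).map (evalMap q α) = ⊥ := by
  rw [RSpace, Submodule.map_span, Submodule.span_eq_bot]
  rintro _ ⟨Y, ⟨hY, -⟩, rfl⟩
  exact hY.2 α hα

end Solutions

theorem image_of_RSpace_defined_over_K_general
    (K : Subfield ℂ) (q : ℕ)
    (Anum : Matrix (Fin q) (Fin q) (Polynomial ℂ)) (den : Polynomial ℂ) (hden : den ≠ 0)
    (hAK : ∀ i j n, (Anum i j).coeff n ∈ K) (hdenK : ∀ n, den.coeff n ∈ K)
    (hdim : Module.finrank ℂ ↥(SolSpace q Anum den) = q)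
    (α : ℂ) (hαK : α ∈ K)
    (P : Fin q → Polynomial ℂ) (hPK : ∀ i n, (P i).coeff n ∈ K) :
    ∃ s : Set (Fin q → ℂ), (∀ v ∈ s, ∀ i, v i ∈ K) ∧
      Submodule.span ℂ s = Submodule.map (evalMap q α) (RSpace q Anum den P) := by
  by_cases hα : α ∈ sysDomain den
  · obtain ⟨s, hsK, hs⟩ := exists_span_eq_ker_mulVecLin K
      (Matrix.of fun k i => PkFun q Anum den P k i α)
      fun k i => PkFun_mem_of_coeff_mem K hAK hdenK hPK hαK hα.1 k i
    exact ⟨s, hsK, hs.trans (map_evalMap_RSpace hden hdim hα P).symm⟩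
  · exact ⟨∅, by simp, by rw [Submodule.span_empty, map_evalMap_RSpace_eq_bot hα]⟩

/-- **Lemma 3.5.** Let `K` be a subfield of `ℂ`, `A = Anum/den ∈ M_q(K(z))`, and let
`α ∈ K*` not be a singularity of the system `Y' = AY`. Then for any
`P₁, …, P_q ∈ K[z]`, the image of `𝓡[P₁,…,P_q]` under the evaluation isomorphism
`𝓢 → ℂ^q`, `Y ↦ Y(α)`, is a subspace of `ℂ^q` defined over `K` (it is spanned by
vectors with coordinates in `K`). -/
theorem image_of_RSpace_defined_over_K
    (K : Subfield ℂ) (q : ℕ) (hq : 1 ≤ q)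
    (Anum : Matrix (Fin q) (Fin q) (Polynomial ℂ)) (den : Polynomial ℂ) (hden : den ≠ 0)
    (hAK : ∀ i j n, (Anum i j).coeff n ∈ K) (hdenK : ∀ n, den.coeff n ∈ K)
    (hdim : Module.finrank ℂ ↥(SolSpace q Anum den) = q)
    (α : ℂ) (hαK : α ∈ K) (hα0 : α ≠ 0) (hαreg : den.eval α ≠ 0)
    (P : Fin q → Polynomial ℂ) (hPK : ∀ i n, (P i).coeff n ∈ K) :
    ∃ s : Set (Fin q → ℂ), (∀ v ∈ s, ∀ i, v i ∈ K) ∧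
      Submodule.span ℂ s = Submodule.map (evalMap q α) (RSpace q Anum den P) :=
  image_of_RSpace_defined_over_K_general K q Anum den hden hAK hdenK hdim α hαK P hPK
end
end

section
/- Let m, N ≥ 1, ξ = (ξ_1,…,ξ_m) ∈ ℂ^m with 1, ξ_1, …, ξ_m linearly independent over ℚ̄, let A ∈ GL_m(ℚ̄), and define ξ' = (ξ'_1,…,ξ'_m) by ξ' = Aξ. If the inequality dim R ≥ (2 − (m−1)/(N+m−1)) · dim(F ∩ R), with equality iff R = {0} or R = ℂ^Ω, holds for the data (m, N, ξ) for every subspace R of ℂ^Ω defined over ℚ̄ of a given dimension ρ, then it also holds for the data (m, N, ξ') for every subspace R of ℂ^Ω defined over ℚ̄ of dimension ρ. -/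
open Polynomial

noncomputable section

/-- The weight `|κ| = κ₁ + … + κ_m` of a multi-index. -/
def wt {m : ℕ} (κ : Fin m → ℕ) : ℕ := ∑ j, κ j

/-- `κ ∈ Ω`, i.e. `N - 1 ≤ |κ| ≤ N`. -/
def inOmega (m N : ℕ) (κ : Fin m → ℕ) : Prop := N - 1 ≤ wt κ ∧ wt κ ≤ N

/-- `κ - e_j` (only meaningful when `κ j ≥ 1`; guarded at use sites). -/
def sub1 {m : ℕ} (κ : Fin m → ℕ) (j : Fin m) : Fin m → ℕ :=
  Function.update κ j (κ j - 1)

/-- The canonical basis vector `E_κ`. -/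
def Evec {m : ℕ} (κ : Fin m → ℕ) : (Fin m → ℕ) → ℂ := fun μ => if μ = κ then 1 else 0

/-- The vector `Z_κ = E_κ + ∑_j ξ_j E_{κ-e_j}` (with `E_{κ-e_j} = 0` when `κ_j = 0`). -/
def Zvec {m : ℕ} (ξ : Fin m → ℂ) (κ : Fin m → ℕ) : (Fin m → ℕ) → ℂ :=
  Evec κ + ∑ j : Fin m, (if κ j = 0 then 0 else ξ j • Evec (sub1 κ j))

/-- `ℂ^Ω`, realized as the space of families supported on
`Ω = {κ : N-1 ≤ |κ| ≤ N}` (the span of the `E_κ`, `κ ∈ Ω`). -/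
def OmegaSpace (m N : ℕ) : Submodule ℂ ((Fin m → ℕ) → ℂ) :=
  Submodule.span ℂ {v | ∃ κ, inOmega m N κ ∧ v = Evec κ}

/-- `F = Span{Z_κ : κ ∈ Θ} ⊆ ℂ^Ω`, where `Θ = {κ : |κ| = N}`. -/
def Fspace (m N : ℕ) (ξ : Fin m → ℂ) : Submodule ℂ ((Fin m → ℕ) → ℂ) :=
  Submodule.span ℂ {v | ∃ κ, wt κ = N ∧ v = Zvec ξ κ}

/-- A subspace of `ℂ^Ω` is defined over `ℚ̄` if it is spanned by vectors all of whose
coordinates are algebraic numbers (equivalently, it has a `ℂ`-basis of such vectors). -/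
def DefinedOverQbar {m : ℕ} (R : Submodule ℂ ((Fin m → ℕ) → ℂ)) : Prop :=
  ∃ s : Set ((Fin m → ℕ) → ℂ), (∀ v ∈ s, ∀ κ, IsAlgebraic ℚ (v κ)) ∧
    Submodule.span ℂ s = R

/-- `1, ξ₁, …, ξ_m` are linearly independent over `ℚ̄`. -/
def LinIndepOverQbar (m : ℕ) (ξ : Fin m → ℂ) : Prop :=
  ∀ (a : ℂ) (c : Fin m → ℂ), IsAlgebraic ℚ a → (∀ j, IsAlgebraic ℚ (c j)) →
    a + ∑ j : Fin m, c j * ξ j = 0 → a = 0 ∧ ∀ j, c j = 0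
/-- The dimension inequality of Theorem 5.1, together with its case of equality:
`dim R ≥ (2 - (m-1)/(N+m-1)) · dim(F ∩ R)`, with equality iff `R = {0}` or `R = ℂ^Ω`. -/
def RatIneq (m N : ℕ) (ξ : Fin m → ℂ) (R : Submodule ℂ ((Fin m → ℕ) → ℂ)) : Prop :=
  (2 - ((m : ℝ) - 1) / ((N : ℝ) + (m : ℝ) - 1)) *
      (Module.finrank ℂ ↥(Fspace m N ξ ⊓ R) : ℝ) ≤ (Module.finrank ℂ ↥R : ℝ) ∧
  ((Module.finrank ℂ ↥R : ℝ) =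
      (2 - ((m : ℝ) - 1) / ((N : ℝ) + (m : ℝ) - 1)) *
        (Module.finrank ℂ ↥(Fspace m N ξ ⊓ R) : ℝ) ↔
    R = ⊥ ∨ R = OmegaSpace m N)

/-!
Pair a family `f : ℕ^m → ℂ` with polynomials by `⟨f, X^κ⟩ = f κ`, identifying `ℂ^(ℕ^m)` with the
dual of `ℂ[X₁, …, X_m]`. Then `E_κ` is the functional `coeff κ`, and `Z_κ` is
`p ↦ coeff κ ((1 + ℓ_ξ) p)` with `ℓ_ξ = ∑ ξ_j X_j`. The change of variables
`σ : X_k ↦ ∑_j A_jk X_j` is a degree-preserving algebra automorphism with algebraic coefficients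
and `σ ℓ_ξ = ℓ_{Aξ}`. Its transpose is therefore a linear automorphism of `ℂ^(ℕ^m)` which
preserves `ℂ^Ω` and definability over `ℚ̄` and carries `F'` onto `F`; since it also preserves
dimensions and intersections, the inequality and its equality case for `R` follow from those for
the image of `R`.
-/

open scoped Matrix

lemma Submodule.map_equiv_eq_of_le {R M : Type*} [Semiring R] [AddCommMonoid M] [Module R M]
    (e : M ≃ₗ[R] M) {p q : Submodule R M} (h : p.map (e : M →ₗ[R] M) ≤ q)
    (h' : q.map (e.symm : M →ₗ[R] M) ≤ p) : p.map (e : M →ₗ[R] M) = q :=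
  le_antisymm h <| by
    rw [Submodule.map_equiv_eq_comap_symm]
    exact Submodule.map_le_iff_le_comap.mp h'

abbrev asFinsupp {m : ℕ} (κ : Fin m → ℕ) : Fin m →₀ ℕ := Finsupp.equivFunOnFinite.symm κ

namespace MvPolynomial

variable {m : ℕ}

def linearForm (v : Fin m → ℂ) : MvPolynomial (Fin m) ℂ := ∑ j, MvPolynomial.C (v j) * X j

def linSubst (B : Matrix (Fin m) (Fin m) ℂ) : MvPolynomial (Fin m) ℂ →ₐ[ℂ] MvPolynomial (Fin m) ℂ :=
  aeval fun k => linearForm (B k)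

lemma linSubst_X (B : Matrix (Fin m) (Fin m) ℂ) (k : Fin m) : linSubst B (X k) = linearForm (B k) :=
  aeval_X _ k

lemma linSubst_linearForm (B : Matrix (Fin m) (Fin m) ℂ) (v : Fin m → ℂ) :
    linSubst B (linearForm v) = linearForm (v ᵥ* B) := by
  simp only [linearForm, map_sum, map_mul, linSubst_X, algHom_C, algebraMap_eq,
    Finset.mul_sum, Matrix.vecMul, dotProduct, Finset.sum_mul, ← mul_assoc]
  exact Finset.sum_comm

lemma linSubst_comp (B B' : Matrix (Fin m) (Fin m) ℂ) :
    (linSubst B').comp (linSubst B) = linSubst (B * B') :=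
  algHom_ext fun k => by
    rw [AlgHom.comp_apply, linSubst_X, linSubst_X, linSubst_linearForm]
    rfl

lemma linSubst_one : linSubst (1 : Matrix (Fin m) (Fin m) ℂ) = AlgHom.id ℂ _ := by
  refine algHom_ext fun k => ?_
  simp [linSubst, linearForm, Matrix.one_apply, apply_ite C, ite_mul, Finset.sum_ite_eq]

lemma isHomogeneous_linearForm (v : Fin m → ℂ) : (linearForm v).IsHomogeneous 1 :=
  IsHomogeneous.sum _ _ _ fun j _ => isHomogeneous_C_mul_X (v j) j

lemma isHomogeneous_linSubst_monomial (B : Matrix (Fin m) (Fin m) ℂ) (d : Fin m →₀ ℕ) :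
    (linSubst B (monomial d 1)).IsHomogeneous d.degree := by
  have h := (isHomogeneous_monomial (d := d) (1 : ℂ) rfl).aeval (n := 1)
    (fun k => linearForm (B k)) fun k => isHomogeneous_linearForm (B k)
  rwa [one_mul] at h

lemma lcoeff_comp_linSubst (B : Matrix (Fin m) (Fin m) ℂ) (κ : Fin m → ℕ) :
    lcoeff ℂ (asFinsupp κ) ∘ₗ (linSubst B).toLinearMap =
      ∑ μ ∈ Finset.Nat.antidiagonalTuple m (wt κ),
        coeff (asFinsupp κ) (linSubst B (monomial (asFinsupp μ) 1)) • lcoeff ℂ (asFinsupp μ) := by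
  -- `linSubst B` preserves degrees, so only the part of degree `|κ|` of its argument matters.
  refine (basisMonomials (Fin m) ℂ).ext fun d => ?_
  simp only [coe_basisMonomials, LinearMap.comp_apply, AlgHom.toLinearMap_apply, lcoeff_apply,
    LinearMap.coe_sum, Finset.sum_apply, LinearMap.smul_apply, coeff_monomial, smul_eq_mul,
    mul_ite, mul_one, mul_zero, Equiv.eq_symm_apply, Finset.sum_ite_eq,
    Finset.Nat.mem_antidiagonalTuple, Equiv.symm_apply_apply]
  split_ifs with h
  · rfl
  · refine (isHomogeneous_linSubst_monomial B d).coeff_eq_zero ?_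
    rw [Finsupp.degree_eq_sum, Finsupp.degree_eq_sum]
    exact fun h' => h h'.symm

def familyEquivDual : ((Fin m → ℕ) → ℂ) ≃ₗ[ℂ] Module.Dual ℂ (MvPolynomial (Fin m) ℂ) :=
  (LinearEquiv.funCongrLeft ℂ ℂ Finsupp.equivFunOnFinite).trans
    ((basisMonomials (Fin m) ℂ).constr ℂ)

lemma familyEquivDual_monomial (f : (Fin m → ℕ) → ℂ) (d : Fin m →₀ ℕ) :
    familyEquivDual f (monomial d 1) = f d :=
  (basisMonomials (Fin m) ℂ).constr_basis ℂ (f ∘ Finsupp.equivFunOnFinite) d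

lemma familyEquivDual_apply (f : (Fin m → ℕ) → ℂ) (p : MvPolynomial (Fin m) ℂ) :
    familyEquivDual f p = ∑ d ∈ p.support, coeff d p * f d :=
  (basisMonomials (Fin m) ℂ).constr_apply ℂ (f ∘ Finsupp.equivFunOnFinite) p

lemma familyEquivDual_Evec (κ : Fin m → ℕ) : familyEquivDual (Evec κ) = lcoeff ℂ (asFinsupp κ) := by
  refine (basisMonomials (Fin m) ℂ).ext fun d => ?_
  simp only [coe_basisMonomials, familyEquivDual_monomial, Evec, lcoeff_apply, coeff_monomial,
    Equiv.eq_symm_apply]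
  rfl

lemma asFinsupp_sub1 {κ : Fin m → ℕ} {j : Fin m} :
    asFinsupp κ - Finsupp.single j 1 = asFinsupp (sub1 κ j) := by
  ext i
  rcases eq_or_ne i j with rfl | hij
  · simp [sub1]
  · simp [sub1, Finsupp.single_eq_of_ne' (Ne.symm hij), Function.update_of_ne hij]

lemma coeff_X_mul_asFinsupp (κ : Fin m → ℕ) (j : Fin m) (p : MvPolynomial (Fin m) ℂ) :
    coeff (asFinsupp κ) (X j * p) = if κ j = 0 then 0 else coeff (asFinsupp (sub1 κ j)) p := by
  rw [coeff_X_mul', asFinsupp_sub1]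
  simp [ite_not]

lemma familyEquivDual_Zvec (ξ : Fin m → ℂ) (κ : Fin m → ℕ) :
    familyEquivDual (Zvec ξ κ) =
      lcoeff ℂ (asFinsupp κ) ∘ₗ LinearMap.mulLeft ℂ (1 + linearForm ξ) := by
  refine LinearMap.ext fun p => ?_
  simp only [Zvec, map_add, map_sum, familyEquivDual_Evec, LinearMap.add_apply, LinearMap.coe_sum,
    Finset.sum_apply, LinearMap.comp_apply, LinearMap.mulLeft_apply, add_mul, one_mul, linearForm,
    Finset.sum_mul, mul_assoc, lcoeff_apply, coeff_C_mul, coeff_X_mul_asFinsupp]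
  congr 1
  refine Finset.sum_congr rfl fun j _ => ?_
  split_ifs <;> simp [familyEquivDual_Evec]

def dualLinSubst (B : Matrix (Fin m) (Fin m) ℂ) : ((Fin m → ℕ) → ℂ) →ₗ[ℂ] ((Fin m → ℕ) → ℂ) :=
  familyEquivDual.symm.toLinearMap ∘ₗ (linSubst B).toLinearMap.dualMap ∘ₗ
    familyEquivDual.toLinearMap

lemma familyEquivDual_dualLinSubst (B : Matrix (Fin m) (Fin m) ℂ) (f : (Fin m → ℕ) → ℂ) :
    familyEquivDual (dualLinSubst B f) = familyEquivDual f ∘ₗ (linSubst B).toLinearMap := by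
  simp [dualLinSubst, LinearMap.dualMap_apply']

lemma dualLinSubst_apply (B : Matrix (Fin m) (Fin m) ℂ) (f : (Fin m → ℕ) → ℂ) (κ : Fin m → ℕ) :
    dualLinSubst B f κ = familyEquivDual f (linSubst B (monomial (asFinsupp κ) 1)) := rfl

lemma dualLinSubst_mul (B B' : Matrix (Fin m) (Fin m) ℂ) :
    dualLinSubst B ∘ₗ dualLinSubst B' = dualLinSubst (B * B') := by
  refine LinearMap.ext fun f => familyEquivDual.injective ?_
  rw [LinearMap.comp_apply, familyEquivDual_dualLinSubst, familyEquivDual_dualLinSubst,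
    familyEquivDual_dualLinSubst, ← linSubst_comp, AlgHom.comp_toLinearMap, LinearMap.comp_assoc]

lemma dualLinSubst_one : dualLinSubst (1 : Matrix (Fin m) (Fin m) ℂ) = LinearMap.id := by
  refine LinearMap.ext fun f => familyEquivDual.injective ?_
  simp [familyEquivDual_dualLinSubst, linSubst_one]

def dualLinSubstEquiv (C : Matrix (Fin m) (Fin m) ℂ) (hC : IsUnit C.det) :
    ((Fin m → ℕ) → ℂ) ≃ₗ[ℂ] ((Fin m → ℕ) → ℂ) :=
  LinearEquiv.ofLinearMap (dualLinSubst C) (dualLinSubst C⁻¹)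
    (by rw [dualLinSubst_mul, Matrix.mul_nonsing_inv C hC, dualLinSubst_one])
    (by rw [dualLinSubst_mul, Matrix.nonsing_inv_mul C hC, dualLinSubst_one])

lemma dualLinSubst_Evec (B : Matrix (Fin m) (Fin m) ℂ) (κ : Fin m → ℕ) :
    dualLinSubst B (Evec κ) = ∑ μ ∈ Finset.Nat.antidiagonalTuple m (wt κ),
      coeff (asFinsupp κ) (linSubst B (monomial (asFinsupp μ) 1)) • Evec μ := by
  refine familyEquivDual.injective ?_
  simp only [familyEquivDual_dualLinSubst, familyEquivDual_Evec, lcoeff_comp_linSubst, map_sum,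
    map_smul]

lemma dualLinSubst_Zvec {B : Matrix (Fin m) (Fin m) ℂ} {ξ ξ' : Fin m → ℂ} (h : ξ' ᵥ* B = ξ)
    (κ : Fin m → ℕ) :
    dualLinSubst B (Zvec ξ κ) = ∑ μ ∈ Finset.Nat.antidiagonalTuple m (wt κ),
      coeff (asFinsupp κ) (linSubst B (monomial (asFinsupp μ) 1)) • Zvec ξ' μ := by
  -- `linSubst B` is multiplicative and maps `1 + linearForm ξ'` to `1 + linearForm ξ`.
  have hcomm : LinearMap.mulLeft ℂ (1 + linearForm ξ) ∘ₗ (linSubst B).toLinearMap =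
      (linSubst B).toLinearMap ∘ₗ LinearMap.mulLeft ℂ (1 + linearForm ξ') := by
    refine LinearMap.ext fun p => ?_
    simp [linSubst_linearForm, h]
  refine familyEquivDual.injective ?_
  simp only [familyEquivDual_dualLinSubst, familyEquivDual_Zvec, LinearMap.comp_assoc, hcomm,
    map_sum, map_smul]
  rw [← LinearMap.comp_assoc, lcoeff_comp_linSubst]
  exact LinearMap.ext fun p => by simp

lemma map_dualLinSubst_OmegaSpace_le (B : Matrix (Fin m) (Fin m) ℂ) (N : ℕ) :
    (OmegaSpace m N).map (dualLinSubst B) ≤ OmegaSpace m N := by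
  rw [OmegaSpace, Submodule.map_span, Submodule.span_le]
  rintro _ ⟨_, ⟨κ, hκ, rfl⟩, rfl⟩
  rw [dualLinSubst_Evec]
  refine Submodule.sum_mem _ fun μ hμ => Submodule.smul_mem _ _ (Submodule.subset_span ⟨μ, ?_, rfl⟩)
  have hwt : wt μ = wt κ := Finset.Nat.mem_antidiagonalTuple.mp hμ
  rwa [inOmega, hwt]

lemma map_dualLinSubst_Fspace_le {B : Matrix (Fin m) (Fin m) ℂ} {ξ ξ' : Fin m → ℂ}
    (h : ξ' ᵥ* B = ξ) (N : ℕ) : (Fspace m N ξ).map (dualLinSubst B) ≤ Fspace m N ξ' := by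
  rw [Fspace, Submodule.map_span, Submodule.span_le]
  rintro _ ⟨_, ⟨κ, hκ, rfl⟩, rfl⟩
  rw [dualLinSubst_Zvec h]
  refine Submodule.sum_mem _ fun μ hμ => Submodule.smul_mem _ _ (Submodule.subset_span ⟨μ, ?_, rfl⟩)
  exact (Finset.Nat.mem_antidiagonalTuple.mp hμ).trans hκ

lemma coeff_linSubst_monomial_mem {S : Subring ℂ} {B : Matrix (Fin m) (Fin m) ℂ}
    (hB : ∀ i j, B i j ∈ S) (d e : Fin m →₀ ℕ) : coeff e (linSubst B (monomial d 1)) ∈ S := by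
  -- The polynomials with coefficients in `S` form the subring `(map S.subtype).range`.
  have hform : ∀ i, linearForm (B i) ∈ (map S.subtype).range := fun i =>
    Subring.sum_mem _ fun j _ => Subring.mul_mem _ ⟨C ⟨B i j, hB i j⟩, map_C _ _⟩ ⟨X j, map_X _ _⟩
  obtain ⟨q, hq⟩ : linSubst B (monomial d 1) ∈ (map S.subtype).range := by
    rw [linSubst, aeval_monomial, map_one, one_mul]
    exact Subring.prod_mem _ fun i _ => Subring.pow_mem _ (hform i) _
  rw [← hq, coeff_map]
  exact (coeff e q).2

lemma dualLinSubst_mem {S : Subring ℂ} {B : Matrix (Fin m) (Fin m) ℂ} (hB : ∀ i j, B i j ∈ S)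
    {f : (Fin m → ℕ) → ℂ} (hf : ∀ κ, f κ ∈ S) (κ : Fin m → ℕ) : dualLinSubst B f κ ∈ S := by
  rw [dualLinSubst_apply, familyEquivDual_apply]
  exact Subring.sum_mem _ fun d _ => Subring.mul_mem _ (coeff_linSubst_monomial_mem hB _ _) (hf _)

lemma map_dualLinSubstEquiv_OmegaSpace (C : Matrix (Fin m) (Fin m) ℂ) (hC : IsUnit C.det)
    (N : ℕ) : (OmegaSpace m N).map (dualLinSubstEquiv C hC : _ →ₗ[ℂ] _) = OmegaSpace m N :=
  Submodule.map_equiv_eq_of_le _ (map_dualLinSubst_OmegaSpace_le C N)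
    (map_dualLinSubst_OmegaSpace_le C⁻¹ N)

lemma map_dualLinSubstEquiv_Fspace {C : Matrix (Fin m) (Fin m) ℂ} (hC : IsUnit C.det)
    {ξ ξ' : Fin m → ℂ} (h : ξ ᵥ* C = ξ') (N : ℕ) :
    (Fspace m N ξ').map (dualLinSubstEquiv C hC : _ →ₗ[ℂ] _) = Fspace m N ξ := by
  refine Submodule.map_equiv_eq_of_le _ (map_dualLinSubst_Fspace_le h N)
    (map_dualLinSubst_Fspace_le ?_ N)
  rw [← h, Matrix.vecMul_vecMul, Matrix.mul_nonsing_inv C hC, Matrix.vecMul_one]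

end MvPolynomial

open MvPolynomial

lemma DefinedOverQbar.map_dualLinSubst {m : ℕ} {B : Matrix (Fin m) (Fin m) ℂ}
    (hB : ∀ i j, IsAlgebraic ℚ (B i j)) {R : Submodule ℂ ((Fin m → ℕ) → ℂ)}
    (hR : DefinedOverQbar R) : DefinedOverQbar (R.map (dualLinSubst B)) := by
  obtain ⟨s, hs, rfl⟩ := hR
  refine ⟨dualLinSubst B '' s, ?_, Submodule.map_span _ _ |>.symm⟩
  rintro _ ⟨v, hv, rfl⟩ κ
  simp_rw [← mem_algebraicClosure_iff] at hB hs ⊢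
  exact dualLinSubst_mem (S := (algebraicClosure ℚ ℂ).toSubring) hB (hs v hv) κ

lemma ratIneq_map_iff {m N : ℕ} {ξ ξ' : Fin m → ℂ}
    (e : ((Fin m → ℕ) → ℂ) ≃ₗ[ℂ] ((Fin m → ℕ) → ℂ))
    (hΩ : (OmegaSpace m N).map (e : _ →ₗ[ℂ] _) = OmegaSpace m N)
    (hF : (Fspace m N ξ').map (e : _ →ₗ[ℂ] _) = Fspace m N ξ) (R : Submodule ℂ ((Fin m → ℕ) → ℂ)) :
    RatIneq m N ξ (R.map (e : _ →ₗ[ℂ] _)) ↔ RatIneq m N ξ' R := by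
  have hinf : Fspace m N ξ ⊓ R.map (e : _ →ₗ[ℂ] _) = (Fspace m N ξ' ⊓ R).map (e : _ →ₗ[ℂ] _) := by
    rw [← hF, Submodule.map_inf _ e.injective]
  have hΩ' : R.map (e : _ →ₗ[ℂ] _) = OmegaSpace m N ↔ R = OmegaSpace m N := by
    conv_lhs => rw [← hΩ]
    exact (Submodule.orderIsoMapComap e).injective.eq_iff
  rw [RatIneq, RatIneq, hinf, LinearEquiv.finrank_map_eq, LinearEquiv.finrank_map_eq,
    Submodule.map_eq_bot_iff, hΩ']

theorem dimension_inequality_invariant_under_GLm_Qbar_general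
    (m N : ℕ) (ξ : Fin m → ℂ)
    (A : Matrix (Fin m) (Fin m) ℂ) (hAalg : ∀ i j, IsAlgebraic ℚ (A i j))
    (hAinv : IsUnit A.det) (ρ : ℕ)
    (H : ∀ R : Submodule ℂ ((Fin m → ℕ) → ℂ), R ≤ OmegaSpace m N →
      DefinedOverQbar R → Module.finrank ℂ ↥R = ρ → RatIneq m N ξ R) :
    ∀ R : Submodule ℂ ((Fin m → ℕ) → ℂ), R ≤ OmegaSpace m N →
      DefinedOverQbar R → Module.finrank ℂ ↥R = ρ →
      RatIneq m N (fun j => ∑ k : Fin m, A j k * ξ k) R := by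
  intro R hRΩ hRQ hRρ
  have hAT : IsUnit Aᵀ.det := by rwa [Matrix.det_transpose]
  have hΩ := map_dualLinSubstEquiv_OmegaSpace Aᵀ hAT N
  have hF := map_dualLinSubstEquiv_Fspace hAT (Matrix.vecMul_transpose A ξ) N
  refine (ratIneq_map_iff _ hΩ hF R).mp (H _ ?_ ?_ ?_)
  · rw [← hΩ]
    exact Submodule.map_mono hRΩ
  · exact hRQ.map_dualLinSubst fun i j => hAalg j i
  · rw [LinearEquiv.finrank_map_eq, hRρ]

/-- **Lemma 5.2.** Let `m, N ≥ 1`, let `1, ξ₁, …, ξ_m` be linearly independent over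
`ℚ̄`, let `A ∈ GL_m(ℚ̄)` and `ξ' = Aξ`. If the dimension inequality of Theorem 5.1
(with its case of equality) holds for `(m, N, ξ)` and every subspace `R ⊆ ℂ^Ω` defined
over `ℚ̄` of a given dimension `ρ`, then it also holds for `(m, N, ξ')` and every such
subspace. -/
theorem dimension_inequality_invariant_under_GLm_Qbar
    (m N : ℕ) (hm : 1 ≤ m) (hN : 1 ≤ N) (ξ : Fin m → ℂ)
    (hξ : LinIndepOverQbar m ξ)
    (A : Matrix (Fin m) (Fin m) ℂ) (hAalg : ∀ i j, IsAlgebraic ℚ (A i j))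
    (hAinv : IsUnit A.det) (ρ : ℕ)
    (H : ∀ R : Submodule ℂ ((Fin m → ℕ) → ℂ), R ≤ OmegaSpace m N →
      DefinedOverQbar R → Module.finrank ℂ ↥R = ρ → RatIneq m N ξ R) :
    ∀ R : Submodule ℂ ((Fin m → ℕ) → ℂ), R ≤ OmegaSpace m N →
      DefinedOverQbar R → Module.finrank ℂ ↥R = ρ →
      RatIneq m N (fun j => ∑ k : Fin m, A j k * ξ k) R :=
  dimension_inequality_invariant_under_GLm_Qbar_general m N ξ A hAalg hAinv ρ H
end
end

section
/- Let m ≥ 2 and N ≥ 1. Let ι : ℂ^{Ω'} → ℂ^Ω be the injective linear map defined by ι(E_κ) = E_{(κ,0)} for κ ∈ Ω', where (κ,0) = (κ_1,…,κ_{m−1},0), and let K = Span{E_κ : κ ∈ Ω, κ_m = 0}. Then ι(F') = F ∩ K, where F' is the subspace of ℂ^{Ω'} built from (m−1, N, (ξ_1,…,ξ_{m−1})) in the same way as F is built from (m, N, (ξ_1,…,ξ_m)). -/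
open Polynomial

noncomputable section

/-- `K = Span{E_κ : κ ∈ Ω, κ_{j₀} = 0}`. -/
def Kspace (m N : ℕ) (j0 : Fin m) : Submodule ℂ ((Fin m → ℕ) → ℂ) :=
  Submodule.span ℂ {v | ∃ κ, inOmega m N κ ∧ κ j0 = 0 ∧ v = Evec κ}

section Aux

variable {m N : ℕ}

/-- Extension-by-zero as a linear map. -/
def extMap (m : ℕ) : ((Fin (m + 1) → ℕ) → ℂ) →ₗ[ℂ] ((Fin (m + 2) → ℕ) → ℂ) where
  toFun v := fun μ : Fin (m + 2) → ℕ =>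
    if μ (Fin.last (m + 1)) = 0 then v (fun j : Fin (m + 1) => μ j.castSucc) else 0
  map_add' a b := by
    funext μ; by_cases h : μ (Fin.last (m + 1)) = 0 <;> simp [h]
  map_smul' c a := by
    funext μ; by_cases h : μ (Fin.last (m + 1)) = 0 <;> simp [h]

lemma wt_snoc (a : Fin (m + 1) → ℕ) (x : ℕ) : wt (Fin.snoc a x) = wt a + x := by
  unfold wt
  rw [Fin.sum_univ_castSucc]
  simp [Fin.snoc_castSucc, Fin.snoc_last]

lemma wt_sub1 {κ : Fin m → ℕ} {j : Fin m} (h : κ j ≠ 0) : wt (sub1 κ j) = wt κ - 1 := by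
  unfold wt sub1
  rw [Finset.sum_update_of_mem (Finset.mem_univ j), Finset.sdiff_singleton_eq_erase]
  rw [← Finset.sum_erase_add _ _ (Finset.mem_univ j)]
  omega

lemma snoc_eq_snoc_iff {a ν : Fin (m + 1) → ℕ} :
    (Fin.snoc ν 0 : Fin (m + 2) → ℕ) = Fin.snoc a 0 ↔ ν = a := by
  constructor
  · intro h
    funext i
    have := congrArg (fun f => f i.castSucc) h
    simpa [Fin.snoc_castSucc] using this
  · intro h; rw [h]

lemma Evec_snoc (a ν : Fin (m + 1) → ℕ) :
    Evec (Fin.snoc a (0:ℕ)) (Fin.snoc ν (0:ℕ)) = Evec a ν := by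
  unfold Evec
  simp [snoc_eq_snoc_iff]

lemma Evec_snoc_zero {a : Fin (m + 1) → ℕ} {μ : Fin (m + 2) → ℕ}
    (h : μ (Fin.last (m + 1)) ≠ 0) : Evec (Fin.snoc a (0:ℕ)) μ = 0 := by
  unfold Evec
  have : μ ≠ Fin.snoc a 0 := by
    intro hμ; apply h; rw [hμ]; simp [Fin.snoc_last]
  simp [this]

/-- `Z_κ(μ) = 0` when `κ_{j0} = 0` but `μ_{j0} ≠ 0`. -/
lemma Zvec_apply_eq_zero {ξ : Fin m → ℂ} {κ μ : Fin m → ℕ} {j0 : Fin m}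
    (hκ : κ j0 = 0) (hμ : μ j0 ≠ 0) : Zvec ξ κ μ = 0 := by
  unfold Zvec
  have hne : μ ≠ κ := fun h => hμ (by rw [h, hκ])
  rw [Pi.add_apply, Finset.sum_apply]
  have h1 : Evec κ μ = 0 := by unfold Evec; simp [hne]
  rw [h1, zero_add]
  apply Finset.sum_eq_zero
  intro j _
  by_cases hj : κ j = 0
  · simp [hj]
  · have hjne : j ≠ j0 := fun h => hj (by rw [h, hκ])
    have : sub1 κ j j0 = κ j0 := Function.update_of_ne (Ne.symm hjne) _ _
    have hne2 : μ ≠ sub1 κ j := fun h => hμ (by rw [h, this, hκ])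
    simp [hj, Evec, hne2]

/-- Evaluation of `Z_κ` at a top-weight point picks out `E_κ`. -/
lemma Zvec_apply_top {ξ : Fin m → ℂ} {κ μ : Fin m → ℕ} (hN : 1 ≤ N)
    (hκ : wt κ = N) (hμ : wt μ = N) :
    Zvec ξ κ μ = if μ = κ then 1 else 0 := by
  unfold Zvec
  rw [Pi.add_apply, Finset.sum_apply]
  have h2 : ∀ j ∈ Finset.univ, (if κ j = 0 then (0 : (Fin m → ℕ) → ℂ)
      else ξ j • Evec (sub1 κ j)) μ = 0 := by
    intro j _
    by_cases hj : κ j = 0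
    · simp [hj]
    · have hwt : wt (sub1 κ j) = N - 1 := by rw [wt_sub1 hj, hκ]
      have : μ ≠ sub1 κ j := by
        intro h; rw [h, hwt] at hμ; omega
      simp [hj, Evec, this]
  rw [Finset.sum_eq_zero h2, add_zero]
  rfl

/-- Elements of `K` vanish at indices whose `j0`-coordinate is nonzero. -/
lemma Kspace_vanish {j0 : Fin m} {v : (Fin m → ℕ) → ℂ} (hv : v ∈ Kspace m N j0)
    {μ : Fin m → ℕ} (hμ : μ j0 ≠ 0) : v μ = 0 := by
  let P : Submodule ℂ ((Fin m → ℕ) → ℂ) :=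
    { carrier := {w | ∀ μ : Fin m → ℕ, μ j0 ≠ 0 → w μ = 0}
      add_mem' := fun ha hb μ h => by
        rw [Pi.add_apply, ha μ h, hb μ h, add_zero]
      zero_mem' := fun μ _ => rfl
      smul_mem' := fun c w hw μ h => by
        rw [Pi.smul_apply, hw μ h, smul_zero] }
  have hK : Kspace m N j0 ≤ P := by
    rw [Kspace, Submodule.span_le]
    rintro w ⟨κ, _, hκ0, rfl⟩ ν hν
    have : ν ≠ κ := fun h => hν (by rw [h, hκ0])
    simp [Evec, this]
  exact hK hv μ hμ

/-- `Fspace` as the span of a range. -/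
lemma Fspace_eq_range (m N : ℕ) (ξ : Fin m → ℂ) :
    Fspace m N ξ = Submodule.span ℂ
      (Set.range fun κ : {κ : Fin m → ℕ // wt κ = N} => Zvec ξ κ.1) := by
  unfold Fspace
  congr 1
  ext v
  constructor
  · rintro ⟨κ, hκ, rfl⟩; exact ⟨⟨κ, hκ⟩, rfl⟩
  · rintro ⟨⟨κ, hκ⟩, rfl⟩; exact ⟨κ, hκ, rfl⟩

lemma sum_eval {ξ : Fin m → ℂ} (c : {κ : Fin m → ℕ // wt κ = N} →₀ ℂ) (hN : 1 ≤ N)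
    {μ : Fin m → ℕ} (hμ : wt μ = N) :
    (c.sum fun κ a => a • Zvec ξ κ.1) μ = c ⟨μ, hμ⟩ := by
  rw [Finsupp.sum, Finset.sum_apply]
  have : ∀ κ ∈ c.support, (c κ • Zvec ξ κ.1) μ = c κ * (if μ = κ.1 then 1 else 0) := by
    intro κ _
    rw [Pi.smul_apply, Zvec_apply_top hN κ.2 hμ]
    rfl
  rw [Finset.sum_congr rfl this]
  rw [Finset.sum_eq_single (⟨μ, hμ⟩ : {κ : Fin m → ℕ // wt κ = N})]
  · simp
  · intro b _ hb
    have : μ ≠ b.1 := fun h => hb (Subtype.ext h.symm)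
    simp [this]
  · intro h
    rw [Finsupp.notMem_support_iff.mp h]
    simp

/-- `Z_κ ∈ K` when `κ ∈ Θ` and `κ_{j0} = 0`. -/
lemma Zvec_mem_K {ξ : Fin m → ℂ} {κ : Fin m → ℕ} {j0 : Fin m} (hN : 1 ≤ N)
    (hκ : wt κ = N) (hκ0 : κ j0 = 0) : Zvec ξ κ ∈ Kspace m N j0 := by
  unfold Zvec
  apply Submodule.add_mem
  · apply Submodule.subset_span
    exact ⟨κ, ⟨by omega, by omega⟩, hκ0, rfl⟩
  · apply Submodule.sum_mem
    intro j _
    by_cases hj : κ j = 0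
    · simp only [hj, if_pos]; exact Submodule.zero_mem _
    · rw [if_neg hj]
      apply Submodule.smul_mem
      apply Submodule.subset_span
      refine ⟨sub1 κ j, ⟨?_, ?_⟩, ?_, rfl⟩
      · rw [wt_sub1 hj, hκ]
      · rw [wt_sub1 hj, hκ]; omega
      · have hjne : j ≠ j0 := fun h => hj (by rw [h, hκ0])
        rw [sub1, Function.update_of_ne (Ne.symm hjne), hκ0]

lemma Zvec_snoc (ξ : Fin (m + 2) → ℂ) (κ' ν : Fin (m + 1) → ℕ) :
    Zvec ξ (Fin.snoc κ' 0) (Fin.snoc ν 0) =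
      Zvec (fun j : Fin (m + 1) => ξ j.castSucc) κ' ν := by
  unfold Zvec
  rw [Pi.add_apply, Pi.add_apply, Finset.sum_apply, Finset.sum_apply, Evec_snoc,
    Fin.sum_univ_castSucc]
  simp only [Fin.snoc_last, Fin.snoc_castSucc, if_true, Pi.zero_apply, add_zero]
  congr 1
  apply Finset.sum_congr rfl
  intro i _
  by_cases hi : κ' i = 0
  · simp [hi]
  · rw [if_neg hi, if_neg hi, Pi.smul_apply, Pi.smul_apply]
    congr 1
    have hsub : sub1 (Fin.snoc κ' (0:ℕ)) i.castSucc = Fin.snoc (sub1 κ' i) (0:ℕ) := by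
      unfold sub1
      rw [Fin.snoc_castSucc, Fin.snoc_update]
    rw [hsub, Evec_snoc]

/-- The key identity: `ι(Z'_{κ'}) = Z_{(κ',0)}`. -/
lemma extMap_Zvec (ξ : Fin (m + 2) → ℂ) (κ' : Fin (m + 1) → ℕ) :
    extMap m (Zvec (fun j : Fin (m + 1) => ξ j.castSucc) κ') = Zvec ξ (Fin.snoc κ' 0) := by
  funext μ
  show (if μ (Fin.last (m + 1)) = 0
    then Zvec (fun j : Fin (m + 1) => ξ j.castSucc) κ' (fun j => μ j.castSucc) else 0)
    = Zvec ξ (Fin.snoc κ' 0) μ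
  by_cases h : μ (Fin.last (m + 1)) = 0
  · rw [if_pos h]
    have hμ : μ = Fin.snoc (fun j : Fin (m + 1) => μ j.castSucc) (0:ℕ) := by
      funext i
      refine Fin.lastCases ?_ ?_ i
      · rw [Fin.snoc_last, h]
      · intro i; rw [Fin.snoc_castSucc]
    conv_rhs => rw [hμ]
    rw [Zvec_snoc]
  · rw [if_neg h]
    exact (Zvec_apply_eq_zero (j0 := Fin.last (m + 1)) (by rw [Fin.snoc_last]) h).symm

end Aux

/-- **Section 5.2, first claim.** Let `m + 2 ≥ 2` and `N ≥ 1`. Let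
`ι : ℂ^{Ω'} → ℂ^Ω` be the injective linear map with `ι(E_κ) = E_{(κ,0)}`, and
`K = Span{E_κ : κ ∈ Ω, κ_m = 0}`. Then `ι(F') = F ∩ K`, where `F'` is built from
`(m+1, N, (ξ₁,…,ξ_{m+1}))` as `F` is built from `(m+2, N, ξ)`. -/
theorem iota_image_of_F_eq_F_inter_K
    (m N : ℕ) (hN : 1 ≤ N) (ξ : Fin (m + 2) → ℂ) (hξ : LinIndepOverQbar (m + 2) ξ) :
    (fun v : (Fin (m + 1) → ℕ) → ℂ => fun μ : Fin (m + 2) → ℕ =>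
        if μ (Fin.last (m + 1)) = 0 then v (fun j : Fin (m + 1) => μ j.castSucc) else 0) ''
        ↑(Fspace (m + 1) N (fun j : Fin (m + 1) => ξ j.castSucc)) =
      ↑(Fspace (m + 2) N ξ ⊓ Kspace (m + 2) N (Fin.last (m + 1))) := by
  have key : Submodule.map (extMap m) (Fspace (m + 1) N (fun j : Fin (m + 1) => ξ j.castSucc))
      = Fspace (m + 2) N ξ ⊓ Kspace (m + 2) N (Fin.last (m + 1)) := by
    apply le_antisymm
    · rw [Fspace, Submodule.map_span, Submodule.span_le]
      rintro w ⟨w', ⟨κ', hκ', rfl⟩, rfl⟩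
      rw [extMap_Zvec]
      constructor
      · apply Submodule.subset_span
        exact ⟨Fin.snoc κ' 0, by rw [wt_snoc, hκ', add_zero], rfl⟩
      · exact Zvec_mem_K hN (by rw [wt_snoc, hκ', add_zero]) (by rw [Fin.snoc_last])
    · rintro v ⟨hvF, hvK⟩
      rw [Fspace_eq_range] at hvF
      obtain ⟨c, hc⟩ := Finsupp.mem_span_range_iff_exists_finsupp.mp hvF
      rw [← hc, Finsupp.sum]
      apply Submodule.sum_mem
      intro κ hκ
      have hlast : κ.1 (Fin.last (m + 1)) = 0 := by
        by_contra h
        have h1 : v κ.1 = 0 := Kspace_vanish hvK h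
        have h2 : v κ.1 = c κ := by
          rw [← hc, sum_eval c hN κ.2]
        exact Finsupp.mem_support_iff.mp hκ (by rw [← h2, h1])
      have hsn : κ.1 = Fin.snoc (fun j : Fin (m + 1) => κ.1 j.castSucc) (0:ℕ) := by
        funext i
        refine Fin.lastCases ?_ ?_ i
        · rw [Fin.snoc_last, hlast]
        · intro i; rw [Fin.snoc_castSucc]
      apply Submodule.smul_mem
      refine ⟨Zvec (fun j : Fin (m + 1) => ξ j.castSucc)
        (fun j : Fin (m + 1) => κ.1 j.castSucc), ?_, ?_⟩
      · apply Submodule.subset_span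
        refine ⟨fun j : Fin (m + 1) => κ.1 j.castSucc, ?_, rfl⟩
        have := κ.2
        rw [hsn, wt_snoc, add_zero] at this
        exact this
      · rw [extMap_Zvec, ← hsn]
  rw [← key]
  show ⇑(extMap m) '' ↑(Fspace (m + 1) N (fun j : Fin (m + 1) => ξ j.castSucc)) = _
  exact (Submodule.map_coe _ _).symm
end
end
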